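/- Let n be an odd integer, P, Q integers with gcd(n, 2QΔ) = 1 where Δ = P² - 4Q, and suppose the Jacobi symbol (Δ/n) = -1. Write n + 1 = 2^R·S and n² - 1 = 2^r·s with S, s odd. Suppose x^n ≡ P - x in ℤ[x]/(n, x² - Px + Q), and that f(x) = x² - Px + Q divides x^s - 1 or divides x^{2^{r-j}s} + 1 in (ℤ/nℤ)[x] for some 1 ≤ j ≤ r. Then either U_S(P,Q) ≡ 0 (mod n) or V_{2^t·S}(P,Q) ≡ 0 (mod n) for some 0 ≤ t < R, i.e., n passes the strong Lucas test with parameters (P, Q). -/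

import Mathlib

open Polynomial

/-- The Lucas sequence `U n (P, Q)`: `U₀ = 0`, `U₁ = 1`, `Uₙ = P·Uₙ₋₁ - Q·Uₙ₋₂`. -/
def lucasU (P Q : ℤ) : ℕ → ℤ
  | 0 => 0
  | 1 => 1
  | n + 2 => P * lucasU P Q (n + 1) - Q * lucasU P Q n

/-- The companion Lucas sequence `V n (P, Q)`: `V₀ = 2`, `V₁ = P`, `Vₙ = P·Vₙ₋₁ - Q·Vₙ₋₂`. -/
def lucasV (P Q : ℤ) : ℕ → ℤ
  | 0 => 2
  | 1 => P
  | n + 2 => P * lucasV P Q (n + 1) - Q * lucasV P Q n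


lemma lucas_UV (P Q : ℤ) {A : Type*} [CommRing A] (a b : A)
    (hab : a + b = (P : A)) (hmul : a * b = (Q : A)) :
    ∀ k, ((lucasU P Q k : ℤ) : A) * (a - b) = a ^ k - b ^ k ∧
         ((lucasV P Q k : ℤ) : A) = a ^ k + b ^ k := by
  intro k
  induction k using Nat.strong_induction_on with
  | _ k ih =>
    match k with
    | 0 => refine ⟨by simp [lucasU], by simp [lucasV]; norm_num⟩
    | 1 => refine ⟨by simp [lucasU], by simpa [lucasV] using hab.symm⟩
    | (k+2) =>
      obtain ⟨h1U, h1V⟩ := ih (k+1) (by omega)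
      obtain ⟨h0U, h0V⟩ := ih k (by omega)
      constructor
      · show ((lucasU P Q (k+2) : ℤ) : A) * (a - b) = _
        rw [show lucasU P Q (k+2) = P * lucasU P Q (k+1) - Q * lucasU P Q k from rfl]
        push_cast
        linear_combination (-(((lucasU P Q (k+1) : ℤ) : A) * (a - b))) * hab +
          (((lucasU P Q k : ℤ) : A) * (a - b)) * hmul + (a + b) * h1U - (a * b) * h0U
      · show ((lucasV P Q (k+2) : ℤ) : A) = _
        rw [show lucasV P Q (k+2) = P * lucasV P Q (k+1) - Q * lucasV P Q k from rfl]
        push_cast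
        linear_combination (-((lucasV P Q (k+1) : ℤ) : A)) * hab +
          (((lucasV P Q k : ℤ) : A)) * hmul + (a + b) * h1V - (a * b) * h0V

lemma two_adic_unique : ∀ (a : ℕ) {b u v : ℕ}, Odd u → Odd v → 2^a * u = 2^b * v → a = b ∧ u = v := by
  intro a
  induction a with
  | zero =>
    intro b u v hu hv h
    rcases b with _ | b
    · simpa using h
    · exfalso
      simp only [pow_zero, one_mul] at h
      have h2 : 2 ∣ 2 ^ (b+1) * v := dvd_mul_of_dvd_left (dvd_pow_self 2 (Nat.succ_ne_zero b)) v
      rw [← h] at h2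
      have := Nat.odd_iff.mp hu
      omega
  | succ a ih =>
    intro b u v hu hv h
    rcases b with _ | b
    · exfalso
      simp only [pow_zero, one_mul] at h
      have h2 : 2 ∣ 2 ^ (a+1) * u := dvd_mul_of_dvd_left (dvd_pow_self 2 (Nat.succ_ne_zero a)) u
      rw [h] at h2
      have := Nat.odd_iff.mp hv
      omega
    · have h' : 2 ^ a * u = 2 ^ b * v := by
        have h2 : 2 * (2 ^ a * u) = 2 * (2 ^ b * v) := by
          rw [← mul_assoc, ← pow_succ', ← mul_assoc, ← pow_succ', h]
        omega
      obtain ⟨h1, h2⟩ := ih hu hv h'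
      exact ⟨by omega, h2⟩

theorem stmt_16 (P Q : ℤ) (Δ : ℤ) (hΔ : Δ = P ^ 2 - 4 * Q)
    (n : ℕ) (hodd : Odd n) (hcop : Int.gcd (n : ℤ) (2 * Q * Δ) = 1)
    (hjac : jacobiSym Δ n = -1)
    (R S r s : ℕ) (hS : Odd S) (hs : Odd s)
    (hRS : n + 1 = 2 ^ R * S) (hrs : n ^ 2 - 1 = 2 ^ r * s)
    (f : (ZMod n)[X]) (hf : f = X ^ 2 - C (P : ZMod n) * X + C (Q : ZMod n))
    (hfrob : f ∣ (X ^ n - (C (P : ZMod n) - X)))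
    (hdiv : f ∣ (X ^ s - 1) ∨ ∃ j, 1 ≤ j ∧ j ≤ r ∧ f ∣ (X ^ (2 ^ (r - j) * s) + 1)) :
    (n : ℤ) ∣ lucasU P Q S ∨ ∃ t < R, (n : ℤ) ∣ lucasV P Q (2 ^ t * S) := by
  -- dispose of n = 1
  rcases eq_or_ne n 1 with rfl | h1
  · exact Or.inl (by simp)
  obtain ⟨c, hc⟩ := hodd
  have hn3 : 3 ≤ n := by omega
  -- arithmetic: n - 1 = 2^e * m
  obtain ⟨e, m, hm, hem⟩ := Nat.exists_eq_two_pow_mul_odd (n := n - 1) (by omega)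
  have hsq : n ^ 2 - 1 = (n + 1) * (n - 1) := by
    simpa using Nat.sq_sub_sq n 1
  have hkey : 2 ^ r * s = 2 ^ (R + e) * (S * m) := by
    rw [← hrs, hsq, hRS, hem]; ring
  obtain ⟨hre, hsm⟩ := two_adic_unique r hs (hS.mul hm) hkey
  have he1 : 1 ≤ e := by
    by_contra h
    have : e = 0 := by omega
    rw [this, pow_zero, one_mul] at hem
    have := Nat.odd_iff.mp hm
    omega
  have hR1 : 1 ≤ R := by
    by_contra h
    have : R = 0 := by omega
    rw [this, pow_zero, one_mul] at hRS
    have := Nat.odd_iff.mp hS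
    omega
  haveI : Fact (1 < n) := ⟨by omega⟩
  -- f is monic of degree 2
  have hflin : f = X ^ 2 + (C (-(P : ZMod n)) * X + C ((Q : ZMod n))) := by
    rw [hf, map_neg]; ring
  have hlindeg : (C (-(P : ZMod n)) * X + C ((Q : ZMod n))).degree < (2 : WithBot ℕ) := by
    refine lt_of_le_of_lt (Polynomial.degree_linear_le) (by norm_num)
  have hmonic : f.Monic := by
    rw [hflin]; exact Polynomial.monic_X_pow_add (by exact_mod_cast hlindeg)
  have hdeg : f.degree = 2 := by
    rw [hflin, add_comm]
    rw [Polynomial.degree_add_eq_right_of_degree_lt (by simpa using hlindeg)]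
    simp
  have hndeg : f.natDegree = 2 := Polynomial.natDegree_eq_of_degree_eq_some hdeg
  -- pass to the quotient ring A
  set A := AdjoinRoot f with hA
  set x : A := AdjoinRoot.root f with hx
  have hx2 : x ^ 2 = (P : A) * x - (Q : A) := by
    have h0 : (AdjoinRoot.mk f) (X ^ 2 - C (P : ZMod n) * X + C (Q : ZMod n)) = 0 := by
      rw [← hf]; exact AdjoinRoot.mk_self
    simp only [map_add, map_sub, map_mul, map_pow, AdjoinRoot.mk_X, AdjoinRoot.mk_C,
      map_intCast] at h0
    linear_combination h0
  set y : A := (P : A) - x with hy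
  have hxy_add : x + y = (P : A) := by rw [hy]; ring
  have hxy_mul : x * y = (Q : A) := by rw [hy]; linear_combination -hx2
  have hyx : y = x ^ n := by
    have h0 : (AdjoinRoot.mk f) (X ^ n - (C (P : ZMod n) - X)) = 0 :=
      AdjoinRoot.mk_eq_zero.mpr hfrob
    simp only [map_sub, map_pow, AdjoinRoot.mk_X, AdjoinRoot.mk_C, map_intCast] at h0
    rw [hy]; linear_combination -h0
  -- units
  have hcop' : IsCoprime ((n : ℤ)) (2 * Q * Δ) := Int.isCoprime_iff_gcd_eq_one.mpr hcop
  have hQcop : IsCoprime ((n : ℤ)) Q := hcop'.of_mul_right_left.of_mul_right_right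
  have hDcop : IsCoprime ((n : ℤ)) Δ := hcop'.of_mul_right_right
  have hunit : ∀ q : ℤ, IsCoprime ((n : ℤ)) q → IsUnit ((q : ℤ) : A) := by
    intro q hq
    obtain ⟨a, b, hab⟩ := hq
    have h1 : ((b : ℤ) : A) * ((q : ℤ) : A) = 1 := by
      have h2 : ((a * n + b * q : ℤ) : A) = ((1 : ℤ) : A) := by rw [hab]
      rw [Int.cast_add, Int.cast_mul, Int.cast_mul, Int.cast_natCast, Int.cast_one] at h2
      have h3 : ((n : ℕ) : A) = 0 := by
        have : (((n : ℕ) : ZMod n) : A) = (algebraMap (ZMod n) A) ((n : ZMod n)) := rfl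
        calc ((n : ℕ) : A) = (algebraMap (ZMod n) A) ((n : ZMod n)) := by
              rw [← this]; norm_cast
          _ = 0 := by rw [ZMod.natCast_self, map_zero]
      rw [h3] at h2
      linear_combination h2
    exact IsUnit.of_mul_eq_one _ ((mul_comm _ _).trans h1)
  have hQu : IsUnit ((Q : ℤ) : A) := hunit Q hQcop
  have hxu : IsUnit x := isUnit_of_mul_isUnit_left (hxy_mul ▸ hQu)
  have hdiffsq : (x - y) ^ 2 = ((Δ : ℤ) : A) := by
    rw [hy, hΔ]; push_cast; rw [Int.cast_mul, Int.cast_ofNat]; linear_combination 4 * hx2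
  have hdu : IsUnit (x - y) := by
    have := hunit Δ hDcop
    rw [← hdiffsq, sq] at this
    exact isUnit_of_mul_isUnit_left this
  -- scalar injectivity
  have hinj : ∀ c : ℤ, ((c : ℤ) : A) = 0 → (n : ℤ) ∣ c := by
    intro c h
    have hcast : ((c : ℤ) : A) = (AdjoinRoot.mk f) (C ((c : ℤ) : ZMod n)) := by
      rw [AdjoinRoot.mk_C, map_intCast]
    rw [hcast, AdjoinRoot.mk_eq_zero] at h
    rcases eq_or_ne (((c : ℤ) : ZMod n)) 0 with h3 | h3
    · exact (ZMod.intCast_zmod_eq_zero_iff_dvd c n).mp h3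
    · exfalso
      exact hmonic.not_dvd_of_natDegree_lt (by rw [Ne, Polynomial.C_eq_zero]; exact h3)
        (by rw [hndeg, Polynomial.natDegree_C]; norm_num) h
  have hn' : n = 2 ^ e * m + 1 := by omega
  -- helper: if x ^ (2^e * s) = 1 then the U-branch holds
  have hUzero : x ^ (2 ^ e * s) = 1 → (n : ℤ) ∣ lucasU P Q S := by
    intro hone
    obtain ⟨hU, _⟩ := lucas_UV P Q x y hxy_add hxy_mul S
    apply hinj
    rw [← (hdu.mul_left_eq_zero : _ ↔ _), hU, hyx, ← pow_mul]
    have hnS : n * S = S + 2 ^ e * s := by rw [hn', hsm]; ring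
    rw [hnS, pow_add, hone, mul_one, sub_self]
  rcases hdiv with hcase | ⟨j, hj1, hjr, hcase⟩
  · -- x ^ s = 1
    left
    apply hUzero
    have hxs : x ^ s = 1 := by
      have h0 : (AdjoinRoot.mk f) (X ^ s - 1) = 0 := AdjoinRoot.mk_eq_zero.mpr hcase
      simp only [map_sub, map_pow, map_one, AdjoinRoot.mk_X] at h0
      rw [hx]; linear_combination h0
    rw [mul_comm, pow_mul, hxs, one_pow]
  · -- x ^ (2^(r-j) * s) = -1
    have hneg : x ^ (2 ^ (r - j) * s) = -1 := by
      have h0 : (AdjoinRoot.mk f) (X ^ (2 ^ (r - j) * s) + 1) = 0 := AdjoinRoot.mk_eq_zero.mpr hcase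
      simp only [map_add, map_pow, map_one, AdjoinRoot.mk_X] at h0
      linear_combination h0
    set k := r - j with hk
    have hkle : k ≤ R + e - 1 := by omega
    rcases le_or_gt e k with hek | hke
    · -- V-branch with t = k - e
      right
      refine ⟨k - e, by omega, ?_⟩
      obtain ⟨_, hV⟩ := lucas_UV P Q x y hxy_add hxy_mul (2 ^ (k - e) * S)
      apply hinj
      rw [hV, hyx, ← pow_mul]
      have hpow : 2 ^ k = 2 ^ e * 2 ^ (k - e) := by
        rw [← pow_add]; congr 1; omega
      have hnN : n * (2 ^ (k - e) * S) = 2 ^ (k - e) * S + 2 ^ k * s := by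
        rw [hn', hsm, hpow]; ring
      rw [hnN, pow_add, hneg, mul_neg_one, add_neg_cancel]
    · -- k < e : reduce to U-branch
      left
      apply hUzero
      have hsplit : 2 ^ e * s = 2 ^ (r - j) * s * 2 ^ (e - k) := by
        rw [← hk, show (2:ℕ) ^ e = 2 ^ k * 2 ^ (e - k) by rw [← pow_add]; congr 1; omega]
        ring
      rw [hsplit, pow_mul, hneg]
      have h2 : 2 ^ (e - k) = 2 * 2 ^ (e - k - 1) := by
        rw [← pow_succ']; congr 1; omega
      rw [h2, pow_mul, neg_one_sq, one_pow]
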